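/- Let H be a group generated by elements a, b, c satisfying a² = b² = c² = (ac)² = 1 and [(ab)², c] = 1. Then the cyclic subgroup ⟨(bc)²⟩ is normal in H. -/
import Mathlib

theorem zpowers_bc_sq_normal {H : Type*} [Group H] (a b c : H)
    (hgen : Subgroup.closure {a, b, c} = ⊤)
    (ha : a ^ 2 = 1) (hb : b ^ 2 = 1) (hc : c ^ 2 = 1)
    (hac : (a * c) ^ 2 = 1)
    (habc : ((a * b) ^ 2)⁻¹ * c⁻¹ * (a * b) ^ 2 * c = 1) :
    (Subgroup.zpowers ((b * c) ^ 2)).Normal := by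
  have ha1 : a * a = 1 := by rw [← sq]; exact ha
  have hb1 : b * b = 1 := by rw [← sq]; exact hb
  have hc1 : c * c = 1 := by rw [← sq]; exact hc
  have hai : a⁻¹ = a := by rw [inv_eq_iff_mul_eq_one]; exact ha1
  have hbi : b⁻¹ = b := by rw [inv_eq_iff_mul_eq_one]; exact hb1
  have hci : c⁻¹ = c := by rw [inv_eq_iff_mul_eq_one]; exact hc1
  have hA2 : ∀ y : H, a * (a * y) = y := fun y => by rw [← mul_assoc, ha1, one_mul]
  have hB2 : ∀ y : H, b * (b * y) = y := fun y => by rw [← mul_assoc, hb1, one_mul]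
  have hC2 : ∀ y : H, c * (c * y) = y := fun y => by rw [← mul_assoc, hc1, one_mul]
  have hca : c * a = a * c := by
    have h1 : (a * c) * (a * c) = 1 := by rw [← sq]; exact hac
    have h2 : (a*c)⁻¹ = a * c := by rw [inv_eq_iff_mul_eq_one]; exact h1
    calc c * a = (a*c)⁻¹ := by rw [mul_inv_rev, hai, hci]
    _ = a * c := h2
  have hca' : ∀ y : H, c * (a * y) = a * (c * y) := fun y => by
    rw [← mul_assoc, hca, mul_assoc]
  have hC' : a*(b*(a*(b*c))) = c*(a*(b*(a*b))) := by
    have h := habc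
    rw [mul_assoc, mul_assoc, inv_mul_eq_one] at h
    rw [hci, sq] at h
    calc a*(b*(a*(b*c))) = ((a*b)*(a*b))*c := by simp [mul_assoc]
    _ = (c * ((a*b)*(a*b)*c))*c := by rw [← h]
    _ = c*(a*(b*(a*b))) := by simp [mul_assoc, hC2, hc1]
  have hkey : a * (b * c) = b * (c * (b * (a * b))) := by
    calc a * (b * c) = b * (a * (a * (b * (a * (b * c))))) := by rw [hA2, hB2]
    _ = b * (a * (c * (a * (b * (a * b))))) := by rw [hC']
    _ = b * (c * (b * (a * b))) := by rw [hca', hA2]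
  have hkey' : ∀ y : H, a * (b * (c * y)) = b * (c * (b * (a * (b * y)))) := fun y => by
    have h : (a * (b * c)) * y = (b * (c * (b * (a * b)))) * y := by rw [hkey]
    simpa [mul_assoc] using h
  set x : H := (b * c)^2 with hx
  have hxw : x = b * (c * (b * c)) := by rw [hx, sq]; simp [mul_assoc]
  have hxi : x⁻¹ = c * (b * (c * b)) := by
    rw [hxw]; simp [mul_inv_rev, hbi, hci, mul_assoc]
  have Fa : a * x * a⁻¹ = x ^ (1:ℤ) := by
    rw [hai, zpow_one, hxw]
    have hassoc : a * (b * (c * (b * c))) * a = a * (b * (c * (b * (c * a)))) := by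
      simp [mul_assoc]
    rw [hassoc]
    calc a * (b * (c * (b * (c * a))))
        = b * (c * (b * (a * (b * (b * (c * a)))))) := by rw [hkey']
      _ = b * (c * (b * (a * (c * a)))) := by rw [hB2]
      _ = b * (c * (b * (a * (a * c)))) := by rw [hca]
      _ = b * (c * (b * c)) := by rw [hA2]
  have Fb : b * x * b⁻¹ = x ^ (-1:ℤ) := by
    rw [hbi, zpow_neg, zpow_one, hxi, hxw]
    simp [mul_assoc, hB2]
  have Fc : c * x * c⁻¹ = x ^ (-1:ℤ) := by
    rw [hci, zpow_neg, zpow_one, hxi, hxw]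
    simp [mul_assoc, hc1, hC2]
  have key : ∀ g : H, (∃ m : ℤ, g * x * g⁻¹ = x ^ m) ∧ (∃ m : ℤ, g⁻¹ * x * g = x ^ m) := by
    intro g
    have hg : g ∈ Subgroup.closure ({a, b, c} : Set H) := by rw [hgen]; trivial
    induction hg using Subgroup.closure_induction with
    | mem z hz =>
      simp only [Set.mem_insert_iff, Set.mem_singleton_iff] at hz
      rcases hz with rfl | rfl | rfl
      · exact ⟨⟨1, Fa⟩, ⟨1, by rw [hai] at Fa ⊢; exact Fa⟩⟩
      · exact ⟨⟨-1, Fb⟩, ⟨-1, by rw [hbi] at Fb ⊢; exact Fb⟩⟩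
      · exact ⟨⟨-1, Fc⟩, ⟨-1, by rw [hci] at Fc ⊢; exact Fc⟩⟩
    | one => exact ⟨⟨1, by simp⟩, ⟨1, by simp⟩⟩
    | mul u v hu hv ihu ihv =>
      obtain ⟨⟨m, hm⟩, ⟨m', hm'⟩⟩ := ihu
      obtain ⟨⟨k, hk⟩, ⟨k', hk'⟩⟩ := ihv
      constructor
      · refine ⟨m * k, ?_⟩
        have h1 : (u * v) * x * (u * v)⁻¹ = u * (v * x * v⁻¹) * u⁻¹ := by
          simp [mul_assoc]
        rw [h1, hk, ← conj_zpow, hm, ← zpow_mul]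
      · refine ⟨k' * m', ?_⟩
        have h1 : (u * v)⁻¹ * x * (u * v) = v⁻¹ * (u⁻¹ * x * u) * v := by
          simp [mul_assoc]
        have h2 : v⁻¹ * x ^ m' * v = (v⁻¹ * x * v) ^ m' := by
          have h3 := conj_zpow (i := m') (a := v⁻¹) (b := x)
          simpa using h3.symm
        rw [h1, hm', h2, hk', ← zpow_mul]
    | inv u hu ihu =>
      obtain ⟨⟨m, hm⟩, ⟨m', hm'⟩⟩ := ihu
      exact ⟨⟨m', by simpa using hm'⟩, ⟨m, by simpa using hm⟩⟩
  refine ⟨?_⟩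
  intro n hn g
  obtain ⟨k, hk⟩ := Subgroup.mem_zpowers_iff.mp hn
  obtain ⟨⟨m, hm⟩, -⟩ := key g
  have hgn : g * n * g⁻¹ = x ^ (m * k) := by
    rw [← hk, ← conj_zpow, hm, ← zpow_mul]
  rw [hgn]
  exact Subgroup.zpow_mem _ (Subgroup.mem_zpowers x) _
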